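/- Let n ≥ 1, m ≥ 1, and a* ∈ {0,1,…,m}^n. Define a ∈ ℤ^d by a_i = a*_i for i ∈ [n] and a_{ij} = min(a*_i, a*_j) for all 2-element subsets {i,j} of [n]. Then a ∈ m·P(K_n), and for all faces F^1,…,F^m of P(K_n) such that a lies in the Minkowski sum F^1 + ⋯ + F^m, there exist subsets S^1,…,S^m ⊆ [n] with a_{S^b} ∈ F^b for every b ∈ [m] and a = ∑_{b=1}^m a_{S^b}. -/

import Mathlib

/-- Edges of the complete graph `K_n`: 2-element subsets of `Fin n`,
encoded as non-diagonal elements of `Sym2 (Fin n)`. -/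
abbrev EdgeKn (n : ℕ) : Type := {e : Sym2 (Fin n) // ¬ e.IsDiag}

/-- Coordinates of `ℝ^d`, `d = n + n(n-1)/2`: vertices and edges of `K_n`. -/
abbrev CoordKn (n : ℕ) : Type := Fin n ⊕ EdgeKn n

/-- The edge coordinate `{i,j}` for distinct `i, j`. -/
def edgeCoord {n : ℕ} (i j : Fin n) (h : i ≠ j) : CoordKn n :=
  Sum.inr ⟨s(i, j), fun hd => h (Sym2.mk_isDiag_iff.mp hd)⟩

/-- The characteristic vector `a_S` of `S ⊆ [n]`. -/
def charVec {n : ℕ} (S : Finset (Fin n)) : CoordKn n → ℝ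
  | Sum.inl i => if i ∈ S then 1 else 0
  | Sum.inr e => Sym2.lift ⟨fun i j => if i ∈ S ∧ j ∈ S then (1 : ℝ) else 0,
      fun i j => by simp [and_comm]⟩ e.1

/-- The standard inner product on `ℝ^d`. -/
def dotP {n : ℕ} (x y : CoordKn n → ℝ) : ℝ := ∑ c, x c * y c

/-- `S` is in the demand set `D(w, p)`: it maximizes `⟨w - p, a_T⟩` over all `T ⊆ [n]`. -/
def InDemand {n : ℕ} (w p : CoordKn n → ℝ) (S : Finset (Fin n)) : Prop :=
  ∀ T : Finset (Fin n),
    dotP (fun c => w c - p c) (charVec T) ≤ dotP (fun c => w c - p c) (charVec S)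

/-- The correlation polytope `P(K_n)`. -/
def corrPolytope (n : ℕ) : Set (CoordKn n → ℝ) :=
  convexHull ℝ (Set.range (charVec (n := n)))

/-- The dilate `m·A` of a set `A ⊆ ℝ^d`. -/
def dilate {n : ℕ} (m : ℕ) (A : Set (CoordKn n → ℝ)) : Set (CoordKn n → ℝ) :=
  {x | ∃ y ∈ A, x = (m : ℝ) • y}

/-- `F` is a face of `P(K_n)`: the set of maximizers of some linear functional `⟨c, ·⟩`. -/
def IsFaceOf {n : ℕ} (F : Set (CoordKn n → ℝ)) : Prop :=
  ∃ c : CoordKn n → ℝ,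
    F = {x | x ∈ corrPolytope n ∧ ∀ y ∈ corrPolytope n, dotP c y ≤ dotP c x}


/-!
The vector `a` is the sum of the characteristic vectors of the layers `L_t = {i | t ≤ a*_i}`,
`t = 1, …, m`; this gives `a ∈ m·P(K_n)`.

Conversely, write each `x^b ∈ F^b` as a convex combination of vertices `a_S`; every `a_S` of
positive weight lies in the face `F^b`. Summing the weights over `b` gives a nonnegative
representation of `a` of total mass `m`. Since `a_i = a_{ij}` whenever `a*_i ≤ a*_j`, every set in
its support is upward closed for `a*`, so the support is a chain; on a chain the total mass and the
vertex coordinates determine the weights, so the weight of `S` is the number of layers equal to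
`S`. Dividing by these multiplicities turns the weights into a doubly stochastic matrix indexed by
`b` and the layers, and a permutation in its support (Birkhoff–von Neumann) assigns to each `b` a
layer `S^b` with `a_{S^b} ∈ F^b`.
-/

open Finset

section General

variable {ι κ : Type*}

theorem exists_weights_of_mem_convexHull_range {E : Type*} [AddCommGroup E] [Module ℝ E]
    [Fintype ι] (v : ι → E) {x : E} (hx : x ∈ convexHull ℝ (Set.range v)) :
    ∃ w : ι → ℝ, (∀ i, 0 ≤ w i) ∧ ∑ i, w i = 1 ∧ ∑ i, w i • v i = x := by
  classical
  rw [convexHull_range_eq_exists_affineCombination] at hx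
  obtain ⟨s, w, hw0, hw1, rfl⟩ := hx
  refine ⟨fun i => if i ∈ s then w i else 0, fun i => ?_, ?_, ?_⟩
  · dsimp only
    split_ifs with h
    exacts [hw0 i h, le_rfl]
  · rw [Finset.sum_ite_mem, Finset.univ_inter, hw1]
  · rw [s.affineCombination_eq_linear_combination _ _ hw1]
    simp [ite_smul, Finset.sum_ite_mem]

theorem eq_weighted_sum_of_weight_ne_zero [Fintype ι] {w r : ι → ℝ} (hw0 : ∀ i, 0 ≤ w i)
    (hw1 : ∑ i, w i = 1) (hle : ∀ i, r i ≤ ∑ j, w j * r j) {i : ι} (hi : w i ≠ 0) :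
    r i = ∑ j, w j * r j := by
  set A := ∑ j, w j * r j
  have hgap : ∑ j, w j * (A - r j) = 0 := by
    simp only [mul_sub, Finset.sum_sub_distrib, ← Finset.sum_mul, hw1, one_mul, sub_self, A]
  have := (Finset.sum_eq_zero_iff_of_nonneg fun j _ =>
    mul_nonneg (hw0 j) (sub_nonneg.mpr (hle j))).mp hgap i (Finset.mem_univ i)
  linarith [(mul_eq_zero.mp this).resolve_left hi]

theorem sum_card_fiber_mul [Fintype ι] [Fintype κ] [DecidableEq κ] (g : ι → κ) (h : κ → ℝ) :
    ∑ k, (#{i | g i = k} : ℝ) * h k = ∑ i, h (g i) := by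
  rw [← Fintype.sum_fiberwise' g h]
  simp [Fintype.card_subtype]

end General

section Chain

theorem subset_of_card_le_of_isChain {ι : Type*} {𝒮 : Set (Finset ι)} (h𝒮 : IsChain (· ⊆ ·) 𝒮)
    {S T : Finset ι} (hS : S ∈ 𝒮) (hT : T ∈ 𝒮) (hcard : #S ≤ #T) : S ⊆ T := by
  rcases h𝒮.total hS hT with h | h
  · exact h
  · exact (Finset.eq_of_subset_of_card_le h hcard).symm ▸ subset_rfl

variable {ι M : Type*} [Fintype ι] [DecidableEq ι] [AddCommMonoid M]

/-- With `T` the largest set in the support and `S` the next one, the sum over the sets through a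
point of `T \ S` isolates the value at `T`; if `T` is alone, the total mass does. -/
theorem eq_zero_of_isChain_of_sum_eq_zero (δ : Finset ι → M)
    (hchain : IsChain (· ⊆ ·) {S | δ S ≠ 0}) (hmass : ∑ S, δ S = 0)
    (hmom : ∀ i, ∑ S with i ∈ S, δ S = 0) : δ = 0 := by
  classical
  by_contra hδ
  set supp : Finset (Finset ι) := {S | δ S ≠ 0}
  have hsupp : ∀ {S}, S ∈ supp ↔ δ S ≠ 0 := by simp [supp]
  have hsub : ∀ {S T}, S ∈ supp → T ∈ supp → #S ≤ #T → S ⊆ T := fun hS hT =>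
    subset_of_card_le_of_isChain hchain (hsupp.1 hS) (hsupp.1 hT)
  obtain ⟨T, hT, hTmax⟩ := supp.exists_max_image card <| by
    obtain ⟨S, hS⟩ := Function.ne_iff.mp hδ
    exact ⟨S, hsupp.2 hS⟩
  by_cases hrest : (supp.erase T).Nonempty
  · obtain ⟨S, hS, hSmax⟩ := (supp.erase T).exists_max_image card hrest
    obtain ⟨hST, hS⟩ := Finset.mem_erase.mp hS
    obtain ⟨i, hiT, hiS⟩ := Finset.exists_of_ssubset <|
      (hsub hS hT (hTmax S hS)).ssubset_of_ne hST
    have hsingle : ∑ U with i ∈ U, δ U = δ T := by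
      refine Finset.sum_eq_single_of_mem T (by simpa using hiT) fun U hiU hUT => ?_
      by_contra hU0
      have hU : U ∈ supp.erase T := Finset.mem_erase.mpr ⟨hUT, hsupp.2 hU0⟩
      exact hiS (hsub (Finset.mem_of_mem_erase hU) hS (hSmax U hU) (by simpa using hiU))
    exact hsupp.1 hT (hsingle ▸ hmom i)
  · have hsingle : ∑ U, δ U = δ T := by
      refine Finset.sum_eq_single T (fun U _ hUT => ?_) (by simp)
      by_contra hU0
      exact hrest ⟨U, Finset.mem_erase.mpr ⟨hUT, hsupp.2 hU0⟩⟩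
    exact hsupp.1 hT (hsingle ▸ hmass)

end Chain

section Matching

variable {κ α : Type*} [Fintype κ] [DecidableEq κ]

theorem exists_perm_forall_ne_zero_of_mem_doublyStochastic {M : Matrix κ κ ℝ}
    (hM : M ∈ doublyStochastic ℝ κ) : ∃ σ : Equiv.Perm κ, ∀ b, M b (σ b) ≠ 0 := by
  obtain ⟨w, hw0, hw1, hwM⟩ := exists_eq_sum_perm_of_mem_doublyStochastic hM
  obtain ⟨σ, -, hσ⟩ := Finset.exists_ne_zero_of_sum_ne_zero (hw1 ▸ one_ne_zero)
  refine ⟨σ, fun b => (lt_of_lt_of_le ((hw0 σ).lt_of_ne' hσ) ?_).ne'⟩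
  rw [← hwM, Matrix.sum_apply]
  calc w σ = (w σ • σ.permMatrix ℝ) b (σ b) := by simp
    _ ≤ ∑ τ, (w τ • τ.permMatrix ℝ) b (σ b) :=
      Finset.single_le_sum (f := fun τ => (w τ • τ.permMatrix ℝ) b (σ b))
        (fun τ _ => mul_nonneg (hw0 τ)
          (nonneg_of_mem_doublyStochastic permMatrix_mem_doublyStochastic))
        (Finset.mem_univ σ)

/-- Birkhoff–von Neumann, applied to the doubly stochastic matrix `w b (g t) / #(g⁻¹ (g t))`. -/
theorem exists_perm_forall_weight_ne_zero [Fintype α] [DecidableEq α] (w : κ → α → ℝ)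
    (g : κ → α) (hw0 : ∀ b S, 0 ≤ w b S) (hw1 : ∀ b, ∑ S, w b S = 1)
    (hcol : ∀ S, ∑ b, w b S = #{t | g t = S}) :
    ∃ σ : Equiv.Perm κ, ∀ b, w b (g (σ b)) ≠ 0 := by
  set N : α → ℝ := fun S => #{t | g t = S}
  have hN : ∀ t, N (g t) ≠ 0 := fun t =>
    Nat.cast_ne_zero.mpr (Finset.card_ne_zero_of_mem (Finset.mem_filter.mpr ⟨mem_univ t, rfl⟩))
  have hrow : ∀ b, ∑ t, w b (g t) / N (g t) = 1 := fun b => by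
    rw [← sum_card_fiber_mul g (fun S => w b S / N S), ← hw1 b]
    refine Finset.sum_congr rfl fun S _ => ?_
    by_cases hS : N S = 0
    · have := (Finset.sum_eq_zero_iff_of_nonneg fun b _ => hw0 b S).mp ((hcol S).trans hS) b
      simp [this]
    · exact mul_div_cancel₀ _ hS
  have hcol' : ∀ t, ∑ b, w b (g t) / N (g t) = 1 := fun t => by
    rw [← Finset.sum_div, hcol, div_self (hN t)]
  obtain ⟨σ, hσ⟩ := exists_perm_forall_ne_zero_of_mem_doublyStochastic
    (M := Matrix.of fun b t => w b (g t) / N (g t))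
    (mem_doublyStochastic_iff_sum.mpr
      ⟨fun b t => div_nonneg (hw0 b _) (Nat.cast_nonneg _), hrow, hcol'⟩)
  exact ⟨σ, fun b => left_ne_zero_of_mul (hσ b)⟩

end Matching

section Layers

variable {ι : Type*}

def IsUpperFor {α : Type*} [Preorder α] (f : ι → α) (S : Finset ι) : Prop :=
  ∀ ⦃i j⦄, f i ≤ f j → i ∈ S → j ∈ S

theorem isChain_setOf_isUpperFor {α : Type*} [LinearOrder α] (f : ι → α) :
    IsChain (· ⊆ ·) {S : Finset ι | IsUpperFor f S} := by
  intro S hS T hT _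
  by_contra h
  simp only [Finset.not_subset, not_or] at h
  obtain ⟨⟨i, hiS, hiT⟩, ⟨j, hjT, hjS⟩⟩ := h
  rcases le_total (f i) (f j) with hij | hji
  · exact hjS (hS hij hiS)
  · exact hiT (hT hji hjT)

variable [Fintype ι]

def layer (f : ι → ℕ) (t : ℕ) : Finset ι := {i | t ≤ f i}

theorem isUpperFor_layer (f : ι → ℕ) (t : ℕ) : IsUpperFor f (layer f t) := fun i j hij hi => by
  simp only [layer, Finset.mem_filter, Finset.mem_univ, true_and] at hi ⊢
  exact hi.trans hij

theorem sum_boole_val_lt {m k : ℕ} (hk : k ≤ m) :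
    ∑ t : Fin m, (if (t : ℕ) < k then 1 else 0 : ℝ) = k := by
  rw [Finset.sum_boole, Fin.card_filter_val_lt, min_eq_right hk]

variable [DecidableEq ι]

theorem isUpperFor_of_weight_ne_zero {μ : Finset ι → ℝ} {f : ι → ℕ} (hμ0 : ∀ S, 0 ≤ μ S)
    (hv : ∀ i, ∑ S with i ∈ S, μ S = f i)
    (he : ∀ i j, i ≠ j → ∑ S with i ∈ S ∧ j ∈ S, μ S = (min (f i) (f j) : ℕ))
    {S : Finset ι} (hS : μ S ≠ 0) : IsUpperFor f S := by
  intro i j hij hiS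
  by_cases hij' : i = j
  · exact hij' ▸ hiS
  by_contra hjS
  have hgap : ∑ T with i ∈ T ∧ j ∉ T, μ T = 0 := by
    have := Finset.sum_filter_add_sum_filter_not {T | i ∈ T} (j ∈ ·) μ
    rw [Finset.filter_filter, Finset.filter_filter, hv, he i j hij', min_eq_left hij] at this
    linarith
  exact hS ((Finset.sum_eq_zero_iff_of_nonneg fun T _ => hμ0 T).mp hgap S (by simp [hiS, hjS]))

theorem weight_eq_card_layer {m : ℕ} {μ : Finset ι → ℝ} {f : ι → ℕ} (hf : ∀ i, f i ≤ m)
    (hμ0 : ∀ S, 0 ≤ μ S) (hmass : ∑ S, μ S = m)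
    (hv : ∀ i, ∑ S with i ∈ S, μ S = f i)
    (he : ∀ i j, i ≠ j → ∑ S with i ∈ S ∧ j ∈ S, μ S = (min (f i) (f j) : ℕ))
    (S : Finset ι) : μ S = #{t : Fin m | layer f (t + 1) = S} := by
  set N : Finset ι → ℝ := fun S => #{t : Fin m | layer f (t + 1) = S}
  have hN : ∀ h : Finset ι → ℝ, ∑ S, N S * h S = ∑ t : Fin m, h (layer f (t + 1)) :=
    sum_card_fiber_mul _
  suffices μ - N = 0 from sub_eq_zero.mp (congrFun this S)
  apply eq_zero_of_isChain_of_sum_eq_zero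
  · refine (isChain_setOf_isUpperFor f).mono fun T hT => ?_
    by_cases hμT : μ T = 0
    · obtain ⟨t, ht⟩ : ({t : Fin m | layer f (t + 1) = T} : Finset (Fin m)).Nonempty := by
        simpa [N, Finset.nonempty_iff_ne_empty, hμT] using hT
      exact (Finset.mem_filter.mp ht).2 ▸ isUpperFor_layer f _
    · exact isUpperFor_of_weight_ne_zero hμ0 hv he hμT
  · simpa [Finset.sum_sub_distrib, hmass, sub_eq_zero] using (hN fun _ => 1).symm
  · intro i
    have hNi := hN fun S => if i ∈ S then 1 else 0
    simp only [mul_boole, ← Finset.sum_filter] at hNi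
    simp only [Pi.sub_apply, Finset.sum_sub_distrib, hv, hNi, layer, Finset.mem_filter,
      Finset.mem_univ, true_and, Nat.add_one_le_iff]
    rw [Finset.sum_const, nsmul_one, Fin.card_filter_val_lt, min_eq_right (hf i), sub_self]

end Layers

section CorrelationPolytope

variable {n : ℕ}

theorem charVec_inl (S : Finset (Fin n)) (i : Fin n) :
    charVec S (Sum.inl i) = if i ∈ S then 1 else 0 := rfl

theorem charVec_edgeCoord (S : Finset (Fin n)) {i j : Fin n} (h : i ≠ j) :
    charVec S (edgeCoord i j h) = if i ∈ S ∧ j ∈ S then 1 else 0 := by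
  simp [charVec, edgeCoord]

theorem coordKn_funext {x y : CoordKn n → ℝ} (hv : ∀ i, x (Sum.inl i) = y (Sum.inl i))
    (he : ∀ i j (h : i ≠ j), x (edgeCoord i j h) = y (edgeCoord i j h)) : x = y := by
  funext c
  rcases c with i | ⟨e, hd⟩
  · exact hv i
  · induction e using Sym2.ind with
    | _ i j => exact he i j fun h => hd (by simp [h])

theorem sum_smul_charVec_inl (μ : Finset (Fin n) → ℝ) (i : Fin n) :
    (∑ S, μ S • charVec S) (Sum.inl i) = ∑ S with i ∈ S, μ S := by
  simp [Finset.sum_apply, charVec_inl, Finset.sum_filter]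

theorem sum_smul_charVec_edgeCoord (μ : Finset (Fin n) → ℝ) {i j : Fin n} (h : i ≠ j) :
    (∑ S, μ S • charVec S) (edgeCoord i j h) = ∑ S with i ∈ S ∧ j ∈ S, μ S := by
  simp [Finset.sum_apply, charVec_edgeCoord _ h, Finset.sum_filter]

theorem charVec_mem_corrPolytope (S : Finset (Fin n)) : charVec S ∈ corrPolytope n :=
  subset_convexHull ℝ _ (Set.mem_range_self S)

theorem IsFaceOf.subset {F : Set (CoordKn n → ℝ)} (hF : IsFaceOf F) : F ⊆ corrPolytope n := by
  obtain ⟨c, rfl⟩ := hF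
  exact fun x hx => hx.1

theorem IsFaceOf.charVec_mem_of_weight_ne_zero {F : Set (CoordKn n → ℝ)} (hF : IsFaceOf F)
    {w : Finset (Fin n) → ℝ} (hw0 : ∀ S, 0 ≤ w S) (hw1 : ∑ S, w S = 1)
    (hx : ∑ S, w S • charVec S ∈ F) {S : Finset (Fin n)} (hS : w S ≠ 0) : charVec S ∈ F := by
  obtain ⟨c, rfl⟩ := hF
  have hdot : dotP c (∑ T, w T • charVec T) = ∑ T, w T * dotP c (charVec T) := by
    change c ⬝ᵥ _ = ∑ T, w T * (c ⬝ᵥ charVec T)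
    simp only [dotProduct_sum, dotProduct_smul, smul_eq_mul]
  refine ⟨charVec_mem_corrPolytope S, fun y hy => ?_⟩
  rw [eq_weighted_sum_of_weight_ne_zero (r := fun T => dotP c (charVec T)) hw0 hw1
    (fun T => hdot ▸ hx.2 _ (charVec_mem_corrPolytope T)) hS, ← hdot]
  exact hx.2 y hy

theorem sum_charVec_mem_dilate {m : ℕ} (hm : 0 < m) (g : Fin m → Finset (Fin n)) :
    ∑ t, charVec (g t) ∈ dilate m (corrPolytope n) := by
  have hm0 : (m : ℝ) ≠ 0 := Nat.cast_ne_zero.mpr hm.ne'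
  refine ⟨∑ t, (m : ℝ)⁻¹ • charVec (g t), ?_, ?_⟩
  · refine (convex_convexHull ℝ _).sum_mem (fun _ _ => by positivity) ?_
      fun t _ => charVec_mem_corrPolytope (g t)
    simp [hm0]
  · rw [← Finset.smul_sum, smul_smul, mul_inv_cancel₀ hm0, one_smul]

theorem sum_charVec_layer {m : ℕ} {astar : Fin n → ℕ} (ha : ∀ i, astar i ≤ m)
    {a : CoordKn n → ℝ} (hav : ∀ i, a (Sum.inl i) = (astar i : ℝ))
    (hae : ∀ (i j : Fin n) (h : i ≠ j),
      a (edgeCoord i j h) = ((min (astar i) (astar j) : ℕ) : ℝ)) :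
    ∑ t : Fin m, charVec (layer astar (t + 1)) = a := by
  refine coordKn_funext (fun i => ?_) fun i j h => ?_
  · simp only [Finset.sum_apply, charVec_inl, layer, Finset.mem_filter, Finset.mem_univ,
      true_and, Nat.add_one_le_iff, hav, sum_boole_val_lt (ha i)]
  · simp only [Finset.sum_apply, charVec_edgeCoord _ h, layer, Finset.mem_filter,
      Finset.mem_univ, true_and, Nat.add_one_le_iff, ← lt_min_iff, hae,
      sum_boole_val_lt ((min_le_left _ _).trans (ha i))]

end CorrelationPolytope

theorem stmt11_general (n m : ℕ) (hm : 1 ≤ m)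
    (astar : Fin n → ℕ) (ha : ∀ i, astar i ≤ m)
    (a : CoordKn n → ℝ)
    (hav : ∀ i, a (Sum.inl i) = (astar i : ℝ))
    (hae : ∀ (i j : Fin n) (h : i ≠ j),
      a (edgeCoord i j h) = ((min (astar i) (astar j) : ℕ) : ℝ)) :
    a ∈ dilate m (corrPolytope n) ∧
    ∀ F : Fin m → Set (CoordKn n → ℝ), (∀ b, IsFaceOf (F b)) →
      (∃ x : Fin m → (CoordKn n → ℝ), (∀ b, x b ∈ F b) ∧ (∑ b, x b) = a) →
      ∃ S : Fin m → Finset (Fin n),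
        (∀ b, charVec (S b) ∈ F b) ∧ (∑ b, charVec (S b)) = a := by
  have hlayers := sum_charVec_layer ha hav hae
  refine ⟨hlayers ▸ sum_charVec_mem_dilate hm _, ?_⟩
  rintro F hF ⟨x, hxF, hxa⟩
  choose w hw0 hw1 hwx using fun b =>
    exists_weights_of_mem_convexHull_range charVec ((hF b).subset (hxF b))
  have hface : ∀ b S, w b S ≠ 0 → charVec S ∈ F b := fun b S hS =>
    (hF b).charVec_mem_of_weight_ne_zero (hw0 b) (hw1 b) ((hwx b).symm ▸ hxF b) hS
  set W : Finset (Fin n) → ℝ := fun S => ∑ b, w b S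
  have hWa : ∑ S, W S • charVec S = a := by
    simp only [W, Finset.sum_smul]
    rw [Finset.sum_comm]
    simp only [hwx, hxa]
  have hW : ∀ S, W S = #{t : Fin m | layer astar (t + 1) = S} :=
    weight_eq_card_layer ha (fun S => Finset.sum_nonneg fun b _ => hw0 b S)
      (by simp only [W]; rw [Finset.sum_comm]; simp [hw1])
      (fun i => by rw [← sum_smul_charVec_inl, hWa, hav])
      (fun i j h => by rw [← sum_smul_charVec_edgeCoord _ h, hWa, hae])
  obtain ⟨σ, hσ⟩ := exists_perm_forall_weight_ne_zero w (fun t => layer astar (t + 1)) hw0 hw1 hW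
  exact ⟨fun b => layer astar (σ b + 1), fun b => hface b _ (hσ b),
    (Equiv.sum_comp σ fun t => charVec (layer astar (t + 1))).trans hlayers⟩

/-- **Proposition 4.4.** Let `a* ∈ {0,1,…,m}^n` and define `a ∈ ℤ^d` by
`a_i = a*_i` and `a_{ij} = min(a*_i, a*_j)`. Then `a ∈ m·P(K_n)`, and for all
faces `F^1, …, F^m` of `P(K_n)` whose Minkowski sum contains `a`, there exist
sets `S^1, …, S^m ⊆ [n]` with `a_{S^b} ∈ F^b` for every `b` and
`a = ∑_b a_{S^b}`. -/
theorem stmt11 (n m : ℕ) (hn : 1 ≤ n) (hm : 1 ≤ m)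
    (astar : Fin n → ℕ) (ha : ∀ i, astar i ≤ m)
    (a : CoordKn n → ℝ)
    (hav : ∀ i, a (Sum.inl i) = (astar i : ℝ))
    (hae : ∀ (i j : Fin n) (h : i ≠ j),
      a (edgeCoord i j h) = ((min (astar i) (astar j) : ℕ) : ℝ)) :
    a ∈ dilate m (corrPolytope n) ∧
    ∀ F : Fin m → Set (CoordKn n → ℝ), (∀ b, IsFaceOf (F b)) →
      (∃ x : Fin m → (CoordKn n → ℝ), (∀ b, x b ∈ F b) ∧ (∑ b, x b) = a) →
      ∃ S : Fin m → Finset (Fin n),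
        (∀ b, charVec (S b) ∈ F b) ∧ (∑ b, charVec (S b)) = a :=
  stmt11_general n m hm astar ha a hav hae
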